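/- Fix integers N ≥ 1 and x, a real R ≥ 3, integers n_1 ∈ ℤ and n_2 ≥ 1, and integers τ_1, τ_2. With Ψ_k(τ) := (1/(2πi))∮_{|w|=R} (q+p/w)^τ (w−1)^k w^{x+N−k−2} dw and Φ_j(τ) := (p/(2πi))∮_{|v−1|=1/R} (q+p/v)^{−τ−1} (v−1)^{−j−1} v^{j−N−x−1} dv, one has Σ_{k=1}^{n_2} Ψ_{n_1−k}(τ_1)·Φ_{n_2−k}(τ_2) = p · (1/(2πi))² ∮_{|v−1|=1/R} (dv/v) ∮_{|w|=R} (dw/w) [ (q+p/w)^{τ_1} ((w−1)/w)^{n_1} (w/v)^{x+N} ] / [ (q+p/v)^{τ_2+1} ((v−1)/v)^{n_2} (w−v) ]. -/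

import Mathlib

open Metric Set MeasureTheory intervalIntegral Real Filter

/-! ### Algebraic core -/

set_option maxHeartbeats 1000000 in
private theorem coreAlg (w v a B W1 WN WX VX P1 P2 P3 P4 s u m : ℂ)
    (hw : w ≠ 0) (hv : v ≠ 0) (hw1 : u ≠ 0) (hv1 : s ≠ 0)
    (hwv : m ≠ 0) (hB : B ≠ 0) (hWN : WN ≠ 0) (hVX : VX ≠ 0)
    (h1 : P1 ≠ 0) (h2 : P2 ≠ 0) (h3 : P3 ≠ 0) (h4 : P4 ≠ 0) :
    v⁻¹ * (w⁻¹ * (a * (W1 / WN) * (WX / VX) /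
        (B * (P1 / P3) * m))) =
      (a * W1 * WX / (WN * w ^ 2) / B * (P3 / (P1 * s)) / (VX * v)) *
          ((w * s / (u * v)) *
            ((P4 * P1 / (P2 * P3) - 1) / (-m / (u * v)))) +
        a * (W1 / P2) * (WX / WN * P4 / w) * B⁻¹ / (VX * v) / m := by
  have e : (P4 * P1 / (P2 * P3) - 1) = (P4 * P1 - P2 * P3) / (P2 * P3) := by
    rw [eq_div_iff (mul_ne_zero h2 h3), sub_mul, div_mul_cancel₀ _ (mul_ne_zero h2 h3), one_mul]
  rw [e]
  simp only [inv_eq_one_div]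
  simp only [div_div_div_cancel_right₀, div_mul_eq_mul_div, mul_div_assoc', div_div,
    neg_div, div_neg, div_div_eq_mul_div]
  rw [div_add_div _ _ ?d1 ?d2]
  case d1 => simp [hw, hv, hw1, hv1, hwv, hB, hWN, hVX, h1, h2, h3, h4, sub_eq_zero]
  case d2 => simp [hw, hv, hwv, hB, hWN, hVX, h2]
  rw [div_eq_div_iff ?d3 ?d4]
  case d3 => simp [hw, hv, hwv, hB, hWN, hVX, h1, h3]
  case d4 =>
    apply mul_ne_zero <;>
    simp [hw, hv, hw1, hv1, hwv, hB, hWN, hVX, h1, h2, h3, h4]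
  field_simp
  ring

/-- The error term in the pointwise decomposition. -/
noncomputable def EIntErr (p : ℝ) (N x n1 τ1 τ2 : ℤ) (n2 : ℕ) (v w : ℂ) : ℂ :=
  ((1 - p : ℂ) + (p : ℂ) / w) ^ τ1 * (w - 1) ^ (n1 - (n2 : ℤ)) *
      w ^ (x + N - n1 + (n2 : ℤ) - 1) *
    (((1 - p : ℂ) + (p : ℂ) / v) ^ (-τ2 - 1) * v ^ (-N - x - 1)) / (w - v)

open Finset in
set_option maxHeartbeats 1000000 in
private theorem keyPt (p : ℝ) (N x n1 τ1 τ2 : ℤ) (n2 : ℕ) (hn2 : 1 ≤ n2) (w v : ℂ)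
    (hw : w ≠ 0) (hu : w - 1 ≠ 0) (hv : v ≠ 0) (hs : v - 1 ≠ 0) (hm : w - v ≠ 0)
    (hb : (1 - p : ℂ) + (p : ℂ) / v ≠ 0) :
    v⁻¹ * (w⁻¹ * (((1 - p : ℂ) + (p : ℂ) / w) ^ τ1 * ((w - 1) / w) ^ n1 * (w / v) ^ (x + N) /
        (((1 - p : ℂ) + (p : ℂ) / v) ^ (τ2 + 1) * ((v - 1) / v) ^ (n2 : ℤ) * (w - v))))
    = (∑ k ∈ Finset.Icc 1 n2,
        (((1 - p : ℂ) + (p : ℂ) / w) ^ τ1 * (w - 1) ^ (n1 - (k : ℤ)) *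
            w ^ (x + N - (n1 - (k : ℤ)) - 2)) *
        (((1 - p : ℂ) + (p : ℂ) / v) ^ (-τ2 - 1) * (v - 1) ^ (-((n2 : ℤ) - (k : ℤ)) - 1) *
            v ^ (((n2 : ℤ) - (k : ℤ)) - N - x - 1)))
      + EIntErr p N x n1 τ1 τ2 n2 v w := by
  unfold EIntErr
  set a := ((1 - p : ℂ) + (p : ℂ) / w) ^ τ1 with ha
  set b := ((1 - p : ℂ) + (p : ℂ) / v) with hbdef
  have hB : b ^ (τ2 + 1) ≠ 0 := zpow_ne_zero _ hb
  have hWN : w ^ n1 ≠ 0 := zpow_ne_zero _ hw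
  have hVX : v ^ (x + N) ≠ 0 := zpow_ne_zero _ hv
  have hP1 : (v - 1) ^ n2 ≠ 0 := pow_ne_zero _ hs
  have hP2 : (w - 1) ^ n2 ≠ 0 := pow_ne_zero _ hu
  have hP3 : v ^ n2 ≠ 0 := pow_ne_zero _ hv
  have hP4 : w ^ n2 ≠ 0 := pow_ne_zero _ hw
  set r := w * (v - 1) / ((w - 1) * v) with hrdef
  have e3 : b ^ (-τ2 - 1) = (b ^ (τ2 + 1))⁻¹ := by
    rw [show -τ2 - 1 = -(τ2 + 1) by ring, zpow_neg]
  have hterm : ∀ k ∈ Finset.Icc 1 n2,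
      (a * (w - 1) ^ (n1 - (k : ℤ)) * w ^ (x + N - (n1 - (k : ℤ)) - 2)) *
        (b ^ (-τ2 - 1) * (v - 1) ^ (-((n2 : ℤ) - (k : ℤ)) - 1) *
            v ^ (((n2 : ℤ) - (k : ℤ)) - N - x - 1))
      = (a * (w - 1) ^ n1 * w ^ (x + N) / (w ^ n1 * w ^ 2) / b ^ (τ2 + 1) *
          (v ^ n2 / ((v - 1) ^ n2 * (v - 1))) / (v ^ (x + N) * v)) * r ^ k := by
    intro k _
    have h1 : (w - 1) ^ (n1 - (k : ℤ)) = (w - 1) ^ n1 / (w - 1) ^ k := by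
      rw [zpow_sub₀ hu, zpow_natCast]
    have h2 : w ^ (x + N - (n1 - (k : ℤ)) - 2) = w ^ (x + N) / w ^ n1 * w ^ k / w ^ 2 := by
      rw [show x + N - (n1 - (k : ℤ)) - 2 = (x + N - n1 + (k : ℤ)) - (2 : ℕ) by push_cast; ring,
        zpow_sub₀ hw, zpow_add₀ hw, zpow_sub₀ hw, zpow_natCast, zpow_natCast]
    have h3 : (v - 1) ^ (-((n2 : ℤ) - (k : ℤ)) - 1) = (v - 1) ^ k / ((v - 1) ^ n2 * (v - 1)) := by
      rw [show -((n2 : ℤ) - (k : ℤ)) - 1 = (k : ℤ) - ((n2 : ℤ) + 1) by ring, zpow_sub₀ hs,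
        zpow_add₀ hs, zpow_natCast, zpow_natCast, zpow_one]
    have h4 : v ^ (((n2 : ℤ) - (k : ℤ)) - N - x - 1) = v ^ n2 / v ^ k / v ^ (x + N) / v := by
      rw [show ((n2 : ℤ) - (k : ℤ)) - N - x - 1 = ((n2 : ℤ) - (k : ℤ) - (x + N)) - 1 by ring,
        zpow_sub₀ hv, zpow_sub₀ hv, zpow_sub₀ hv, zpow_natCast, zpow_natCast, zpow_one]
    rw [h1, h2, h3, h4, e3, hrdef, div_pow, mul_pow, mul_pow]
    ring
  rw [Finset.sum_congr rfl hterm, ← Finset.mul_sum]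
  have hr1 : r - 1 = -(w - v) / ((w - 1) * v) := by
    rw [hrdef]
    field_simp
    ring
  have hrne : r ≠ 1 := by
    intro h
    rw [h, sub_self] at hr1
    have h0 := hr1.symm
    rw [div_eq_zero_iff, neg_eq_zero] at h0
    rcases h0 with h' | h'
    · exact hm h'
    · exact mul_ne_zero hu hv h'
  have hsum : ∑ k ∈ Finset.Icc 1 n2, r ^ k = r * ((r ^ n2 - 1) / (r - 1)) := by
    rw [← Finset.Ico_add_one_right_eq_Icc, geom_sum_Ico hrne (by omega : 1 ≤ n2 + 1), pow_succ', pow_one,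
      show r * r ^ n2 - r = r * (r ^ n2 - 1) by ring, mul_div_assoc]
  rw [hsum]
  have hrn : r ^ n2 = w ^ n2 * (v - 1) ^ n2 / ((w - 1) ^ n2 * v ^ n2) := by
    rw [hrdef, div_pow, mul_pow, mul_pow]
  have hE : a * (w - 1) ^ (n1 - (n2 : ℤ)) * w ^ (x + N - n1 + (n2 : ℤ) - 1) *
        (b ^ (-τ2 - 1) * v ^ (-N - x - 1)) / (w - v)
      = a * ((w - 1) ^ n1 / (w - 1) ^ n2) * (w ^ (x + N) / w ^ n1 * w ^ n2 / w) *
          (b ^ (τ2 + 1))⁻¹ / (v ^ (x + N) * v) / (w - v) := by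
    have e1 : (w - 1) ^ (n1 - (n2 : ℤ)) = (w - 1) ^ n1 / (w - 1) ^ n2 := by
      rw [zpow_sub₀ hu, zpow_natCast]
    have e2 : w ^ (x + N - n1 + (n2 : ℤ) - 1) = w ^ (x + N) / w ^ n1 * w ^ n2 / w := by
      rw [show x + N - n1 + (n2 : ℤ) - 1 = (x + N - n1 + (n2 : ℤ)) - 1 by ring,
        zpow_sub₀ hw, zpow_add₀ hw, zpow_sub₀ hw, zpow_natCast, zpow_one]
    have e4 : v ^ (-N - x - 1) = (v ^ (x + N))⁻¹ * v⁻¹ := by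
      rw [show -N - x - 1 = -(x + N) + -1 by ring, zpow_add₀ hv, zpow_neg, zpow_neg, zpow_one]
    rw [e1, e2, e3, e4]
    ring
  rw [hE]
  have hL1 : ((w - 1) / w) ^ n1 = (w - 1) ^ n1 / w ^ n1 := div_zpow _ _ _
  have hL2 : (w / v) ^ (x + N) = w ^ (x + N) / v ^ (x + N) := div_zpow _ _ _
  have hL3 : ((v - 1) / v) ^ (n2 : ℤ) = (v - 1) ^ n2 / v ^ n2 := by
    rw [div_zpow, zpow_natCast, zpow_natCast]
  rw [hL1, hL2, hL3, hr1, hrn, hrdef]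
  have := coreAlg w v a (b ^ (τ2 + 1)) ((w - 1) ^ n1) (w ^ n1) (w ^ (x + N)) (v ^ (x + N))
    ((v - 1) ^ n2) ((w - 1) ^ n2) (v ^ n2) (w ^ n2) (v - 1) (w - 1) (w - v)
    hw hv hu hs hm hB hWN hVX hP1 hP2 hP3 hP4
  convert this using 2

/-! ### Geometry of the two circles -/

private lemma hrR {R : ℝ} (hR : 3 ≤ R) : 1 / R ≤ 1 / 3 :=
  one_div_le_one_div_of_le (by norm_num) hR

private lemma memW_ne_zero {R : ℝ} (hR : 3 ≤ R) {w : ℂ} (hw : w ∈ sphere (0 : ℂ) R) :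
    w ≠ 0 := by
  rw [mem_sphere_zero_iff_norm] at hw
  intro h
  rw [h, norm_zero] at hw
  linarith

private lemma memW_sub_one_ne_zero {R : ℝ} (hR : 3 ≤ R) {w : ℂ} (hw : w ∈ sphere (0 : ℂ) R) :
    w - 1 ≠ 0 := by
  rw [mem_sphere_zero_iff_norm] at hw
  intro h
  rw [sub_eq_zero] at h
  rw [h, norm_one] at hw
  linarith

private lemma memV_ne_zero {R : ℝ} (hR : 3 ≤ R) {v : ℂ} (hv : v ∈ closedBall (1 : ℂ) (1 / R)) :
    v ≠ 0 := by
  rw [mem_closedBall_iff_norm] at hv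
  intro h
  rw [h] at hv
  simp only [zero_sub, norm_neg, norm_one] at hv
  have := hrR hR
  linarith

private lemma memV_sub_one_ne_zero {R : ℝ} (hR : 3 ≤ R) {v : ℂ}
    (hv : v ∈ sphere (1 : ℂ) (1 / R)) : v - 1 ≠ 0 := by
  rw [mem_sphere_iff_norm] at hv
  intro h
  rw [h, norm_zero] at hv
  have : (0:ℝ) < 1 / R := by positivity
  linarith

private lemma memV_b_ne_zero {R : ℝ} (hR : 3 ≤ R) {p : ℝ} (hp : 0 < p) (hp1 : p < 1) {v : ℂ}
    (hv : v ∈ closedBall (1 : ℂ) (1 / R)) : (1 - p : ℂ) + (p : ℂ) / v ≠ 0 := by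
  have hv0 : v ≠ 0 := memV_ne_zero hR hv
  have hq : (1 : ℂ) - (p : ℂ) ≠ 0 := by
    intro h
    have : ((1 - p : ℝ) : ℂ) = 0 := by push_cast; linear_combination h
    rw [Complex.ofReal_eq_zero] at this
    linarith
  intro h
  have h2 : ((1 : ℂ) - (p : ℂ)) * v + p = 0 := by
    field_simp at h
    linear_combination h
  have hveq : v - 1 = -1 / (1 - (p : ℂ)) := by
    rw [eq_div_iff hq]
    linear_combination h2
  have hnorm : ‖v - 1‖ = 1 / (1 - p) := by
    rw [hveq, norm_div, norm_neg, norm_one]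
    congr 1
    have h5 : (1 : ℂ) - (p : ℂ) = ((1 - p : ℝ) : ℂ) := by push_cast; ring
    rw [h5, Complex.norm_real, Real.norm_eq_abs, abs_of_pos (by linarith)]
  rw [mem_closedBall_iff_norm, hnorm] at hv
  have h3 : (1 : ℝ) ≤ 1 / (1 - p) := by
    rw [le_div_iff₀ (by linarith)]
    linarith
  have := hrR hR
  linarith

private lemma memWV_ne_zero {R : ℝ} (hR : 3 ≤ R) {w v : ℂ} (hw : w ∈ sphere (0 : ℂ) R)
    (hv : v ∈ closedBall (1 : ℂ) (1 / R)) : w - v ≠ 0 := by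
  rw [mem_sphere_zero_iff_norm] at hw
  rw [mem_closedBall_iff_norm] at hv
  intro h
  rw [sub_eq_zero] at h
  have h1 : ‖v‖ ≤ ‖(1 : ℂ)‖ + ‖v - 1‖ := by
    calc ‖v‖ = ‖1 + (v - 1)‖ := by ring_nf
    _ ≤ ‖(1 : ℂ)‖ + ‖v - 1‖ := norm_add_le _ _
  rw [norm_one] at h1
  have := hrR hR
  rw [h] at hw
  linarith

/-! ### Cauchy vanishing of the `v`-integral of `EIntErr` -/

private lemma EInt_v_integral_zero (p : ℝ) (hp : 0 < p) (hp1 : p < 1) (N x n1 τ1 τ2 : ℤ)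
    (n2 : ℕ) {R : ℝ} (hR : 3 ≤ R) {w : ℂ} (hw : w ∈ sphere (0 : ℂ) R) :
    (∮ v in C(1, 1 / R), EIntErr p N x n1 τ1 τ2 n2 v w) = 0 := by
  have hdiff : ∀ z ∈ closedBall (1 : ℂ) (1 / R),
      DifferentiableAt ℂ (fun v => EIntErr p N x n1 τ1 τ2 n2 v w) z := by
    intro z hz
    have hz0 : z ≠ 0 := memV_ne_zero hR hz
    have hzb : (1 - p : ℂ) + (p : ℂ) / z ≠ 0 := memV_b_ne_zero hR hp hp1 hz
    have hzw : w - z ≠ 0 := memWV_ne_zero hR hw hz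
    unfold EIntErr
    apply DifferentiableAt.div
    · apply DifferentiableAt.mul
      · exact differentiableAt_const _
      · apply DifferentiableAt.mul
        · apply DifferentiableAt.zpow
          · exact (differentiableAt_const _).add
              ((differentiableAt_const _).div differentiableAt_id hz0)
          · exact Or.inl hzb
        · exact differentiableAt_id.zpow (Or.inl hz0)
    · exact (differentiableAt_const _).sub differentiableAt_id
    · exact hzw
  apply Complex.circleIntegral_eq_zero_of_differentiable_on_off_countable
    (le_of_lt (by positivity : (0:ℝ) < 1 / R)) Set.countable_empty
  · exact fun z hz => (hdiff z hz).continuousAt.continuousWithinAt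
  · exact fun z hz => hdiff z (ball_subset_closedBall hz.1)

/-! ### Fubini for the error term -/

private lemma EInt_joint_continuous (p : ℝ) (hp : 0 < p) (hp1 : p < 1) (N x n1 τ1 τ2 : ℤ)
    (n2 : ℕ) {R : ℝ} (hR : 3 ≤ R)
    (hgood : ∀ w ∈ sphere (0 : ℂ) R, (1 - p : ℂ) + (p : ℂ) / w ≠ 0 ∨ 0 ≤ τ1) :
    Continuous fun q : ℝ × ℝ =>
      EIntErr p N x n1 τ1 τ2 n2 (circleMap 1 (1 / R) q.1) (circleMap 0 R q.2) := by
  have hR0 : (0:ℝ) ≤ R := by linarith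
  have hr0 : (0:ℝ) ≤ 1 / R := by positivity
  have hVmem : ∀ t : ℝ, circleMap 1 (1 / R) t ∈ closedBall (1:ℂ) (1 / R) :=
    fun t => sphere_subset_closedBall (circleMap_mem_sphere 1 hr0 t)
  have hWmem : ∀ t : ℝ, circleMap 0 R t ∈ sphere (0:ℂ) R :=
    fun t => circleMap_mem_sphere 0 hR0 t
  have cW : Continuous fun q : ℝ × ℝ => circleMap 0 R q.2 :=
    (continuous_circleMap _ _).comp continuous_snd
  have cV : Continuous fun q : ℝ × ℝ => circleMap 1 (1 / R) q.1 :=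
    (continuous_circleMap _ _).comp continuous_fst
  have cA : Continuous fun q : ℝ × ℝ => (1 - p : ℂ) + (p : ℂ) / circleMap 0 R q.2 :=
    continuous_const.add (continuous_const.div cW fun q => memW_ne_zero hR (hWmem q.2))
  have cB : Continuous fun q : ℝ × ℝ => (1 - p : ℂ) + (p : ℂ) / circleMap 1 (1 / R) q.1 :=
    continuous_const.add (continuous_const.div cV fun q => memV_ne_zero hR (hVmem q.1))
  unfold EIntErr
  apply Continuous.div
  · exact (((cA.zpow₀ τ1 fun q => hgood _ (hWmem q.2)).mul
      ((cW.sub continuous_const).zpow₀ _ fun q =>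
        Or.inl (memW_sub_one_ne_zero hR (hWmem q.2)))).mul
      (cW.zpow₀ _ fun q => Or.inl (memW_ne_zero hR (hWmem q.2)))).mul
      ((cB.zpow₀ _ fun q => Or.inl (memV_b_ne_zero hR hp hp1 (hVmem q.1))).mul
        (cV.zpow₀ _ fun q => Or.inl (memV_ne_zero hR (hVmem q.1))))
  · exact cW.sub cV
  · exact fun q => memWV_ne_zero hR (hWmem q.2) (hVmem q.1)

private lemma EInt_fubini (p : ℝ) (hp : 0 < p) (hp1 : p < 1) (N x n1 τ1 τ2 : ℤ) (n2 : ℕ)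
    {R : ℝ} (hR : 3 ≤ R)
    (hgood : ∀ w ∈ sphere (0 : ℂ) R, (1 - p : ℂ) + (p : ℂ) / w ≠ 0 ∨ 0 ≤ τ1) :
    CircleIntegrable (fun v => ∮ w in C(0, R), EIntErr p N x n1 τ1 τ2 n2 v w) 1 (1 / R) ∧
      (∮ v in C(1, 1 / R), ∮ w in C(0, R), EIntErr p N x n1 τ1 τ2 n2 v w) = 0 := by
  have hR0 : (0:ℝ) ≤ R := by linarith
  set μ : Measure ℝ := volume.restrict (Ioc (0:ℝ) (2 * π)) with hμ
  set E : ℂ → ℂ → ℂ := EIntErr p N x n1 τ1 τ2 n2 with hE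
  set V : ℝ → ℂ := circleMap 1 (1 / R) with hV
  set W : ℝ → ℂ := circleMap 0 R with hW
  set G : ℝ × ℝ → ℂ := fun q => deriv (circleMap 0 R) q.2 • E (V q.1) (W q.2) with hG
  set G2 : ℝ × ℝ → ℂ :=
    fun q => deriv (circleMap 1 (1 / R)) q.1 • G q with hG2
  have hEcont : Continuous fun q : ℝ × ℝ => E (V q.1) (W q.2) :=
    EInt_joint_continuous p hp hp1 N x n1 τ1 τ2 n2 hR hgood
  have cd2 : Continuous fun q : ℝ × ℝ => deriv (circleMap 0 R) q.2 := by
    simp only [deriv_circleMap]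
    exact (((continuous_circleMap _ _).comp continuous_snd).mul continuous_const)
  have cd1 : Continuous fun q : ℝ × ℝ => deriv (circleMap 1 (1 / R)) q.1 := by
    simp only [deriv_circleMap]
    exact (((continuous_circleMap _ _).comp continuous_fst).mul continuous_const)
  have hGcont : Continuous G := cd2.smul hEcont
  have hG2cont : Continuous G2 := cd1.smul hGcont
  have hprod : μ.prod μ = (volume.prod volume).restrict
      (Ioc (0:ℝ) (2 * π) ×ˢ Ioc (0:ℝ) (2 * π)) := Measure.prod_restrict _ _
  have hGint : Integrable G (μ.prod μ) := by
    rw [hprod]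
    exact (hGcont.continuousOn.integrableOn_compact
      (isCompact_Icc.prod isCompact_Icc)).mono_set
      (prod_mono Ioc_subset_Icc_self Ioc_subset_Icc_self)
  have hG2int : Integrable G2 (μ.prod μ) := by
    rw [hprod]
    exact (hG2cont.continuousOn.integrableOn_compact
      (isCompact_Icc.prod isCompact_Icc)).mono_set
      (prod_mono Ioc_subset_Icc_self Ioc_subset_Icc_self)
  have heq : ∀ θ1 : ℝ, (∮ w in C(0, R), E (V θ1) w) = ∫ θ2, G (θ1, θ2) ∂μ := by
    intro θ1
    rw [circleIntegral, intervalIntegral.integral_of_le Real.two_pi_pos.le]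
  constructor
  · show IntervalIntegrable (fun θ1 => (fun v => ∮ w in C(0, R), E v w) (V θ1)) volume 0 (2 * π)
    rw [intervalIntegrable_iff_integrableOn_Ioc_of_le Real.two_pi_pos.le]
    have hfe : (fun θ1 => ∮ w in C(0, R), E (V θ1) w) = fun θ1 => ∫ θ2, G (θ1, θ2) ∂μ :=
      funext heq
    show IntegrableOn (fun θ1 => ∮ w in C(0, R), E (V θ1) w) (Ioc 0 (2 * π)) volume
    rw [hfe]
    exact hGint.integral_prod_left
  · calc (∮ v in C(1, 1 / R), ∮ w in C(0, R), E v w)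
        = ∫ θ1 in (0:ℝ)..(2 * π), deriv (circleMap 1 (1 / R)) θ1 •
            ∮ w in C(0, R), E (V θ1) w := rfl
      _ = ∫ θ1, deriv (circleMap 1 (1 / R)) θ1 • ∫ θ2, G (θ1, θ2) ∂μ ∂μ := by
          rw [intervalIntegral.integral_of_le Real.two_pi_pos.le]
          simp only [heq]
          rfl
      _ = ∫ θ1, ∫ θ2, G2 (θ1, θ2) ∂μ ∂μ := by
          simp only [hG2, ← MeasureTheory.integral_smul]
      _ = ∫ θ2, ∫ θ1, G2 (θ1, θ2) ∂μ ∂μ := integral_integral_swap hG2int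
      _ = ∫ θ2, deriv (circleMap 0 R) θ2 • ∮ v in C(1, 1 / R), E v (W θ2) ∂μ := by
          refine integral_congr_ae (Eventually.of_forall fun θ2 => ?_)
          dsimp only
          have hcirc : (∮ v in C(1, 1 / R), E v (W θ2))
              = ∫ θ1, deriv (circleMap 1 (1 / R)) θ1 • E (V θ1) (W θ2) ∂μ := by
            rw [circleIntegral, intervalIntegral.integral_of_le Real.two_pi_pos.le]
          rw [hcirc, ← MeasureTheory.integral_smul]
          refine integral_congr_ae (Eventually.of_forall fun θ1 => ?_)
          simp only [hG2, hG, smul_smul]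
          ring_nf
      _ = ∫ _θ2 : ℝ, (0:ℂ) ∂μ := by
          refine integral_congr_ae (Eventually.of_forall fun θ2 => ?_)
          dsimp only
          rw [hE, hW, EInt_v_integral_zero p hp hp1 N x n1 τ1 τ2 n2 hR
            (circleMap_mem_sphere 0 hR0 θ2), smul_zero]
      _ = 0 := integral_zero _ _

/-! ### Sums of circle integrals -/


private lemma circleIntegral_add {f g : ℂ → ℂ} {c : ℂ} {R : ℝ} (hf : CircleIntegrable f c R)
    (hg : CircleIntegrable g c R) :
    (∮ z in C(c, R), (f z + g z)) = (∮ z in C(c, R), f z) + ∮ z in C(c, R), g z := by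
  simp only [circleIntegral, smul_add, intervalIntegral.integral_add hf.out hg.out]

private lemma circleIntegral_finset_sum {ι : Type*} (s : Finset ι) {f : ι → ℂ → ℂ} {c : ℂ}
    {R : ℝ} (h : ∀ i ∈ s, CircleIntegrable (f i) c R) :
    (∮ z in C(c, R), ∑ i ∈ s, f i z) = ∑ i ∈ s, ∮ z in C(c, R), f i z := by
  simp only [circleIntegral, Finset.smul_sum]
  rw [intervalIntegral.integral_finset_sum (fun i hi => (h i hi).out)]

private lemma circleIntegrable_const_mul {f : ℂ → ℂ} {c : ℂ} {R : ℝ}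
    (h : CircleIntegrable f c R) (a : ℂ) : CircleIntegrable (fun z => a * f z) c R := by
  show IntervalIntegrable (fun θ => a * f (circleMap c R θ)) volume 0 (2 * π)
  exact (h : IntervalIntegrable _ _ _ _).const_mul a

/-! ### Non-integrability in the degenerate case -/

private lemma not_circleIntegrable (p : ℝ) (hp : 0 < p) (hp1 : p < 1) (τ1 : ℤ) {R : ℝ}
    (hR : 3 ≤ R) {w₀ : ℂ} (hw₀mem : w₀ ∈ sphere (0:ℂ) R)
    (hzero : (1 - p : ℂ) + (p : ℂ) / w₀ = 0) (hτ : τ1 < 0) {h : ℂ → ℂ}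
    (hcont : ContinuousOn h (sphere (0:ℂ) R)) (hne : ∀ w ∈ sphere (0:ℂ) R, h w ≠ 0) :
    ¬ CircleIntegrable (fun w => ((1 - p : ℂ) + (p : ℂ) / w) ^ τ1 * h w) 0 R := by
  intro hint
  have hR0 : (0:ℝ) ≤ R := by linarith
  have hw₀0 : w₀ ≠ 0 := memW_ne_zero hR hw₀mem
  have hq : (1 : ℂ) - (p : ℂ) ≠ 0 := by
    intro hq0
    have : ((1 - p : ℝ) : ℂ) = 0 := by push_cast; linear_combination hq0
    rw [Complex.ofReal_eq_zero] at this
    linarith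
  have hkey : ((1 : ℂ) - (p : ℂ)) * w₀ + p = 0 := by
    field_simp at hzero
    linear_combination hzero
  set g : ℂ → ℂ := fun w => w ^ τ1 / ((1:ℂ) - p) ^ τ1 * (h w)⁻¹ with hg
  have hgcont : ContinuousOn g (sphere (0:ℂ) R) := by
    apply ContinuousOn.mul
    · exact (continuousOn_id.zpow₀ τ1 fun w hw => Or.inl (memW_ne_zero hR hw)).div_const _
    · exact hcont.inv₀ hne
  have h2 : IntervalIntegrable (fun θ =>
      (((1 - p : ℂ) + (p : ℂ) / circleMap 0 R θ) ^ τ1 * h (circleMap 0 R θ)) *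
        g (circleMap 0 R θ)) volume 0 (2 * π) :=
    IntervalIntegrable.mul_continuousOn (hint : IntervalIntegrable _ _ _ _)
      (hgcont.comp_continuous (continuous_circleMap 0 R)
        fun θ => circleMap_mem_sphere 0 hR0 θ).continuousOn
  have h3 : CircleIntegrable (fun z : ℂ => (z - w₀) ^ τ1) 0 R := by
    show IntervalIntegrable (fun θ => (circleMap 0 R θ - w₀) ^ τ1) volume 0 (2 * π)
    have hfun : (fun θ => (circleMap 0 R θ - w₀) ^ τ1) = fun θ =>
        (((1 - p : ℂ) + (p : ℂ) / circleMap 0 R θ) ^ τ1 * h (circleMap 0 R θ)) *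
          g (circleMap 0 R θ) := by
      funext θ
      set w := circleMap 0 R θ with hwdef
      have hwmem : w ∈ sphere (0:ℂ) R := circleMap_mem_sphere 0 hR0 θ
      have hw0 : w ≠ 0 := memW_ne_zero hR hwmem
      have hhw : h w ≠ 0 := hne _ hwmem
      have hb : (1 - p : ℂ) + (p : ℂ) / w = ((1:ℂ) - p) * (w - w₀) / w := by
        field_simp
        linear_combination hkey
      rw [hg, hb, div_zpow, mul_zpow]
      have hWτ : w ^ τ1 ≠ 0 := zpow_ne_zero _ hw0
      have hQτ : ((1:ℂ) - p) ^ τ1 ≠ 0 := zpow_ne_zero _ hq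
      field_simp
    rw [hfun]
    exact h2
  rw [circleIntegrable_sub_zpow_iff] at h3
  rcases h3 with h' | h' | h'
  · linarith
  · omega
  · exact h' (by rwa [abs_of_pos (by linarith)])


open Metric Set MeasureTheory intervalIntegral Real Filter Finset

set_option maxHeartbeats 2000000

/-- `Ψ_k(τ) = (1/2πi) ∮_{|w|=R} (q+p/w)^τ (w-1)^k w^{x+N-k-2} dw`. -/
noncomputable def Psi (p R : ℝ) (N x k τ : ℤ) : ℂ :=
  (2 * Real.pi * Complex.I)⁻¹ *
    ∮ w in C(0, R), ((1 - p : ℂ) + (p : ℂ) / w) ^ τ * (w - 1) ^ k * w ^ (x + N - k - 2)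

/-- `Φ_j(τ) = (p/2πi) ∮_{|v-1|=1/R} (q+p/v)^{-τ-1} (v-1)^{-j-1} v^{j-N-x-1} dv`. -/
noncomputable def Phi (p R : ℝ) (N x j τ : ℤ) : ℂ :=
  (p : ℂ) * (2 * Real.pi * Complex.I)⁻¹ *
    ∮ v in C(1, 1/R),
      ((1 - p : ℂ) + (p : ℂ) / v) ^ (-τ - 1) * (v - 1) ^ (-j - 1) * v ^ (j - N - x - 1)

/-- The finite sum `Σ_{k=1}^{n₂} Ψ_{n₁-k}(τ₁) Φ_{n₂-k}(τ₂)` equals the double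
contour integral
`p (1/2πi)² ∮_{|v-1|=1/R} (dv/v) ∮_{|w|=R} (dw/w)
  (q+p/w)^{τ₁} ((w-1)/w)^{n₁} (w/v)^{x+N} /
  [(q+p/v)^{τ₂+1} ((v-1)/v)^{n₂} (w-v)]`. -/
theorem sum_Psi_Phi_as_double_integral (p : ℝ) (hp : 0 < p) (hp1 : p < 1)
    (N : ℤ) (hN : 1 ≤ N) (x : ℤ) (R : ℝ) (hR : 3 ≤ R)
    (n1 : ℤ) (n2 : ℕ) (hn2 : 1 ≤ n2) (τ1 τ2 : ℤ) :
    (∑ k ∈ Finset.Icc 1 n2,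
        Psi p R N x (n1 - (k : ℤ)) τ1 * Phi p R N x ((n2 : ℤ) - (k : ℤ)) τ2) =
      (p : ℂ) *
        ((2 * Real.pi * Complex.I)⁻¹ *
          ∮ v in C(1, 1/R),
            v⁻¹ *
              ((2 * Real.pi * Complex.I)⁻¹ *
                ∮ w in C(0, R),
                  w⁻¹ *
                    (((1 - p : ℂ) + (p : ℂ) / w) ^ τ1 * ((w - 1) / w) ^ n1 *
                        (w / v) ^ (x + N) /
                      (((1 - p : ℂ) + (p : ℂ) / v) ^ (τ2 + 1) *
                        ((v - 1) / v) ^ (n2 : ℤ) * (w - v))))) := by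
  have hR0 : (0:ℝ) ≤ R := by linarith
  have hr0 : (0:ℝ) ≤ 1 / R := by positivity
  by_cases hgood : ∀ w ∈ sphere (0:ℂ) R, (1 - p : ℂ) + (p : ℂ) / w ≠ 0 ∨ 0 ≤ τ1
  · -- main case
    -- continuity of the ψ integrands on the outer circle
    have hψcont : ∀ k : ℕ, ContinuousOn
        (fun w : ℂ => ((1 - p : ℂ) + (p : ℂ) / w) ^ τ1 * (w - 1) ^ (n1 - (k : ℤ)) *
          w ^ (x + N - (n1 - (k : ℤ)) - 2)) (sphere (0:ℂ) R) := by
      intro k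
      exact (((continuousOn_const.add (continuousOn_const.div continuousOn_id
          fun w hw => memW_ne_zero hR hw)).zpow₀ τ1 hgood).mul
        ((continuousOn_id.sub continuousOn_const).zpow₀ _
          fun w hw => Or.inl (memW_sub_one_ne_zero hR hw))).mul
        (continuousOn_id.zpow₀ _ fun w hw => Or.inl (memW_ne_zero hR hw))
    -- continuity of the φ integrands on the inner circle
    have hφcont : ∀ k : ℕ, ContinuousOn
        (fun v : ℂ => ((1 - p : ℂ) + (p : ℂ) / v) ^ (-τ2 - 1) *
          (v - 1) ^ (-((n2 : ℤ) - (k : ℤ)) - 1) * v ^ (((n2 : ℤ) - (k : ℤ)) - N - x - 1))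
        (sphere (1:ℂ) (1/R)) := by
      intro k
      exact (((continuousOn_const.add (continuousOn_const.div continuousOn_id
          fun v hv => memV_ne_zero hR (sphere_subset_closedBall hv))).zpow₀ _
          fun v hv => Or.inl (memV_b_ne_zero hR hp hp1 (sphere_subset_closedBall hv))).mul
        ((continuousOn_id.sub continuousOn_const).zpow₀ _
          fun v hv => Or.inl (memV_sub_one_ne_zero hR hv))).mul
        (continuousOn_id.zpow₀ _
          fun v hv => Or.inl (memV_ne_zero hR (sphere_subset_closedBall hv)))
    -- continuity of the error term in `w` for fixed `v` on the inner circle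
    have hEcont : ∀ v ∈ sphere (1:ℂ) (1/R),
        ContinuousOn (fun w => EIntErr p N x n1 τ1 τ2 n2 v w) (sphere (0:ℂ) R) := by
      intro v hv
      unfold EIntErr
      exact ContinuousOn.div
        (((((continuousOn_const.add (continuousOn_const.div continuousOn_id
            fun w hw => memW_ne_zero hR hw)).zpow₀ τ1 hgood).mul
          ((continuousOn_id.sub continuousOn_const).zpow₀ _
            fun w hw => Or.inl (memW_sub_one_ne_zero hR hw))).mul
          (continuousOn_id.zpow₀ _ fun w hw => Or.inl (memW_ne_zero hR hw))).mul
          continuousOn_const)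
        (continuousOn_id.sub continuousOn_const)
        (fun w hw => memWV_ne_zero hR hw (sphere_subset_closedBall hv))
    have hfub := EInt_fubini p hp hp1 N x n1 τ1 τ2 n2 hR hgood
    -- the key pointwise identity on the inner circle
    have key : EqOn
        (fun v : ℂ => v⁻¹ *
          ((2 * Real.pi * Complex.I)⁻¹ *
            ∮ w in C(0, R),
              w⁻¹ *
                (((1 - p : ℂ) + (p : ℂ) / w) ^ τ1 * ((w - 1) / w) ^ n1 *
                    (w / v) ^ (x + N) /
                  (((1 - p : ℂ) + (p : ℂ) / v) ^ (τ2 + 1) *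
                    ((v - 1) / v) ^ (n2 : ℤ) * (w - v)))))
        (fun v : ℂ =>
          (∑ k ∈ Finset.Icc 1 n2, Psi p R N x (n1 - (k : ℤ)) τ1 *
            (((1 - p : ℂ) + (p : ℂ) / v) ^ (-τ2 - 1) * (v - 1) ^ (-((n2 : ℤ) - (k : ℤ)) - 1) *
              v ^ (((n2 : ℤ) - (k : ℤ)) - N - x - 1))) +
          (2 * Real.pi * Complex.I)⁻¹ * ∮ w in C(0, R), EIntErr p N x n1 τ1 τ2 n2 v w)
        (sphere (1:ℂ) (1/R)) := by
      intro v hv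
      have hv0 : v ≠ 0 := memV_ne_zero hR (sphere_subset_closedBall hv)
      have hv1 : v - 1 ≠ 0 := memV_sub_one_ne_zero hR hv
      have hb : (1 - p : ℂ) + (p : ℂ) / v ≠ 0 :=
        memV_b_ne_zero hR hp hp1 (sphere_subset_closedBall hv)
      dsimp only
      rw [mul_left_comm, ← circleIntegral.integral_const_mul]
      rw [circleIntegral.integral_congr hR0 (fun w hw =>
        keyPt p N x n1 τ1 τ2 n2 hn2 w v (memW_ne_zero hR hw) (memW_sub_one_ne_zero hR hw)
          hv0 hv1 (memWV_ne_zero hR hw (sphere_subset_closedBall hv)) hb)]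
      rw [circleIntegral_add
        (ContinuousOn.circleIntegrable hR0 (continuousOn_finset_sum _
          fun k _ => (hψcont k).fun_mul continuousOn_const))
        (ContinuousOn.circleIntegrable hR0 (hEcont v hv))]
      rw [circleIntegral_finset_sum _ (fun k _ =>
        ContinuousOn.circleIntegrable hR0 ((hψcont k).fun_mul continuousOn_const))]
      have hswap : ∀ k ∈ Finset.Icc 1 n2,
          (∮ w in C(0, R),
            (((1 - p : ℂ) + (p : ℂ) / w) ^ τ1 * (w - 1) ^ (n1 - (k : ℤ)) *
              w ^ (x + N - (n1 - (k : ℤ)) - 2)) *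
            (((1 - p : ℂ) + (p : ℂ) / v) ^ (-τ2 - 1) * (v - 1) ^ (-((n2 : ℤ) - (k : ℤ)) - 1) *
              v ^ (((n2 : ℤ) - (k : ℤ)) - N - x - 1)))
          = (((1 - p : ℂ) + (p : ℂ) / v) ^ (-τ2 - 1) * (v - 1) ^ (-((n2 : ℤ) - (k : ℤ)) - 1) *
              v ^ (((n2 : ℤ) - (k : ℤ)) - N - x - 1)) *
            ∮ w in C(0, R), ((1 - p : ℂ) + (p : ℂ) / w) ^ τ1 * (w - 1) ^ (n1 - (k : ℤ)) *
              w ^ (x + N - (n1 - (k : ℤ)) - 2) := by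
        intro k _
        rw [← circleIntegral.integral_const_mul]
        exact circleIntegral.integral_congr hR0 fun w _ => mul_comm _ _
      rw [Finset.sum_congr rfl hswap, mul_add, Finset.mul_sum]
      congr 1
      refine Finset.sum_congr rfl fun k _ => ?_
      show _ = Psi p R N x (n1 - (k : ℤ)) τ1 * _
      rw [Psi]
      ring
    rw [circleIntegral.integral_congr hr0 key]
    rw [circleIntegral_add
      (ContinuousOn.circleIntegrable hr0 (continuousOn_finset_sum _
        fun k _ => continuousOn_const.fun_mul (hφcont k)))
      (circleIntegrable_const_mul hfub.1 _)]
    rw [circleIntegral.integral_const_mul, hfub.2, mul_zero, add_zero]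
    rw [circleIntegral_finset_sum _ (fun k _ =>
      ContinuousOn.circleIntegrable hr0 (continuousOn_const.fun_mul (hφcont k)))]
    rw [Finset.mul_sum, Finset.mul_sum]
    refine Finset.sum_congr rfl fun k _ => ?_
    rw [circleIntegral.integral_const_mul, Phi]
    ring
  · -- degenerate case: the pole `-p/(1-p)` lies on the outer circle and `τ1 < 0`
    push_neg at hgood
    obtain ⟨w₀, hw₀mem, hw₀, hτ⟩ := hgood
    have hPsi0 : ∀ k : ℕ, Psi p R N x (n1 - (k : ℤ)) τ1 = 0 := by
      intro k
      rw [Psi]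
      have hfe : (fun w : ℂ => ((1 - p : ℂ) + (p : ℂ) / w) ^ τ1 * (w - 1) ^ (n1 - (k : ℤ)) *
          w ^ (x + N - (n1 - (k : ℤ)) - 2))
          = fun w : ℂ => ((1 - p : ℂ) + (p : ℂ) / w) ^ τ1 *
            ((w - 1) ^ (n1 - (k : ℤ)) * w ^ (x + N - (n1 - (k : ℤ)) - 2)) :=
        funext fun w => by ring
      rw [hfe, circleIntegral.integral_undef, mul_zero]
      refine not_circleIntegrable p hp hp1 τ1 hR hw₀mem hw₀ hτ ?_ ?_
      · exact ((continuousOn_id.sub continuousOn_const).zpow₀ _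
          fun w hw => Or.inl (memW_sub_one_ne_zero hR hw)).mul
          (continuousOn_id.zpow₀ _ fun w hw => Or.inl (memW_ne_zero hR hw))
      · intro w hw
        exact mul_ne_zero (zpow_ne_zero _ (memW_sub_one_ne_zero hR hw))
          (zpow_ne_zero _ (memW_ne_zero hR hw))
    have hLHS : (∑ k ∈ Finset.Icc 1 n2,
        Psi p R N x (n1 - (k : ℤ)) τ1 * Phi p R N x ((n2 : ℤ) - (k : ℤ)) τ2) = 0 :=
      Finset.sum_eq_zero fun k _ => by rw [hPsi0 k, zero_mul]
    rw [hLHS]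
    have hval : EqOn
        (fun v : ℂ => v⁻¹ *
          ((2 * Real.pi * Complex.I)⁻¹ *
            ∮ w in C(0, R),
              w⁻¹ *
                (((1 - p : ℂ) + (p : ℂ) / w) ^ τ1 * ((w - 1) / w) ^ n1 *
                    (w / v) ^ (x + N) /
                  (((1 - p : ℂ) + (p : ℂ) / v) ^ (τ2 + 1) *
                    ((v - 1) / v) ^ (n2 : ℤ) * (w - v)))))
        (fun _ : ℂ => (0 : ℂ)) (sphere (1:ℂ) (1/R)) := by
      intro v hv
      have hv0 : v ≠ 0 := memV_ne_zero hR (sphere_subset_closedBall hv)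
      have hv1 : v - 1 ≠ 0 := memV_sub_one_ne_zero hR hv
      have hb : (1 - p : ℂ) + (p : ℂ) / v ≠ 0 :=
        memV_b_ne_zero hR hp hp1 (sphere_subset_closedBall hv)
      have hD : ((1 - p : ℂ) + (p : ℂ) / v) ^ (τ2 + 1) * ((v - 1) / v) ^ (n2 : ℤ) ≠ 0 :=
        mul_ne_zero (zpow_ne_zero _ hb) (zpow_ne_zero _ (div_ne_zero hv1 hv0))
      dsimp only
      have hfe : (fun w : ℂ => w⁻¹ *
          (((1 - p : ℂ) + (p : ℂ) / w) ^ τ1 * ((w - 1) / w) ^ n1 * (w / v) ^ (x + N) /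
            (((1 - p : ℂ) + (p : ℂ) / v) ^ (τ2 + 1) * ((v - 1) / v) ^ (n2 : ℤ) * (w - v))))
          = fun w : ℂ => ((1 - p : ℂ) + (p : ℂ) / w) ^ τ1 *
            (w⁻¹ * (((w - 1) / w) ^ n1 * (w / v) ^ (x + N) /
              (((1 - p : ℂ) + (p : ℂ) / v) ^ (τ2 + 1) * ((v - 1) / v) ^ (n2 : ℤ) * (w - v)))) :=
        funext fun w => by ring
      rw [hfe, circleIntegral.integral_undef, mul_zero, mul_zero]
      refine not_circleIntegrable p hp hp1 τ1 hR hw₀mem hw₀ hτ ?_ ?_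
      · refine (continuousOn_id.inv₀ fun w hw => memW_ne_zero hR hw).mul
          (ContinuousOn.div (ContinuousOn.mul ?_ ?_) ?_ ?_)
        · exact ((continuousOn_id.sub continuousOn_const).div continuousOn_id
            fun w hw => memW_ne_zero hR hw).zpow₀ _ fun w hw =>
            Or.inl (div_ne_zero (memW_sub_one_ne_zero hR hw) (memW_ne_zero hR hw))
        · exact (continuousOn_id.div continuousOn_const fun w _ => hv0).zpow₀ _
            fun w hw => Or.inl (div_ne_zero (memW_ne_zero hR hw) hv0)
        · exact continuousOn_const.mul (continuousOn_id.sub continuousOn_const)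
        · exact fun w hw => mul_ne_zero hD
            (memWV_ne_zero hR hw (sphere_subset_closedBall hv))
      · intro w hw
        refine mul_ne_zero (inv_ne_zero (memW_ne_zero hR hw)) (div_ne_zero (mul_ne_zero
          (zpow_ne_zero _ (div_ne_zero (memW_sub_one_ne_zero hR hw) (memW_ne_zero hR hw)))
          (zpow_ne_zero _ (div_ne_zero (memW_ne_zero hR hw) hv0)))
          (mul_ne_zero hD (memWV_ne_zero hR hw (sphere_subset_closedBall hv))))
    rw [circleIntegral.integral_congr hr0 hval]
    have h0 : (∮ _v in C(1, 1/R), (0:ℂ)) = 0 := by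
      simp [circleIntegral]
    rw [h0, mul_zero, mul_zero]
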